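/- arXiv:1910.06432 — 8 statements merged into one kernel-verified Lean document; each statement's English description precedes it below -/
import Mathlib

section
/- Let Q̃ be an M×M real matrix with zero row sums (∑_{j} Q̃(i,j) = 0 for every i), let α ∈ ℝ^M be a constant vector, and let T̃ ∈ ℝ. Define φ : ℝ → ℝ^M by φ(t) = −∫_t^{T̃} exp(Q̃(T̃−s)) α ds, where exp denotes the matrix exponential. Then φ(T̃) = 0 and for every t ∈ ℝ and every i, the component φ_i is differentiable with φ_i'(t) = ∑_{j ≠ i} Q̃(i,j) (φ_i(t) − φ_j(t)) + α_i. -/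
/-!
Write `g s = exp((T̃ - s) Q̃) α`, so that `φ(t) = -∫_t^T̃ g` and `φ' = g` by the fundamental theorem
of calculus. Since `g' = -Q̃ g` and `g(T̃) = α`, integrating gives `Q̃ φ(t) = α - g(t)`, i.e.
`φ' = α - Q̃ φ`. Zero row sums turn `-(Q̃ φ)_i` into `∑_{j ≠ i} Q̃_{ij} (φ_i - φ_j)`.
-/

open NormedSpace MeasureTheory intervalIntegral Matrix

namespace Matrix

variable {ι R : Type*} [Fintype ι] [DecidableEq ι] [CommRing R]

theorem sum_erase_mul_sub_of_sum_row_eq_zero {Q : Matrix ι ι R} (hQ : ∀ i, ∑ j, Q i j = 0)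
    (x : ι → R) (i : ι) : ∑ j ∈ Finset.univ.erase i, Q i j * (x i - x j) = -(Q *ᵥ x) i := by
  rw [Finset.sum_erase _ (by simp), mulVec, dotProduct]
  simp only [mul_sub, Finset.sum_sub_distrib, ← Finset.sum_mul, hQ i, zero_mul, zero_sub]

end Matrix

section BackwardFlow

variable {ι : Type*} [Fintype ι] [DecidableEq ι] (Q : Matrix ι ι ℝ) (v : ι → ℝ) (T : ℝ)

section LinftyOpNorm

attribute [local instance] Matrix.linftyOpNormedRing Matrix.linftyOpNormedAlgebra

theorem hasDerivAt_exp_sub_smul_mulVec (s : ℝ) :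
    HasDerivAt (fun u => exp ((T - u) • Q) *ᵥ v) (-(Q *ᵥ (exp ((T - s) • Q) *ᵥ v))) s := by
  have hexp := (hasDerivAt_exp_smul_const' (𝕂 := ℝ) Q (T - s)).scomp s
    ((hasDerivAt_id s).const_sub T)
  rw [Function.comp_def, neg_one_smul] at hexp
  have hL := (LinearMap.toContinuousLinearMap ((mulVecBilin ℝ ℝ).flip v)).hasFDerivAt.comp_hasDerivAt
    s hexp
  refine hL.congr_deriv ?_
  change (-(Q * _)) *ᵥ v = _
  rw [neg_mulVec, mulVec_mulVec]
  -- the two sides differ only in the (defeq) instance path of the matrix product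
  rfl

end LinftyOpNorm

theorem continuous_exp_sub_smul_mulVec : Continuous fun u => exp ((T - u) • Q) *ᵥ v :=
  continuous_iff_continuousAt.2 fun s => (hasDerivAt_exp_sub_smul_mulVec Q v T s).continuousAt

theorem mulVec_integral_exp_sub_smul_mulVec (t : ℝ) :
    Q *ᵥ ∫ s in t..T, exp ((T - s) • Q) *ᵥ v = exp ((T - t) • Q) *ᵥ v - v := by
  have hcont := continuous_exp_sub_smul_mulVec Q v T
  have hQcont : Continuous fun s => Q *ᵥ (exp ((T - s) • Q) *ᵥ v) :=
    continuous_const.matrix_mulVec hcont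
  have hftc := integral_eq_sub_of_hasDerivAt (fun s _ => hasDerivAt_exp_sub_smul_mulVec Q v T s)
    (hQcont.fun_neg.intervalIntegrable t T)
  have hcomm : Q *ᵥ ∫ s in t..T, exp ((T - s) • Q) *ᵥ v
      = ∫ s in t..T, Q *ᵥ (exp ((T - s) • Q) *ᵥ v) :=
    ((mulVecLin Q).toContinuousLinearMap.intervalIntegral_comp_comm
      (hcont.intervalIntegrable t T)).symm
  rw [intervalIntegral.integral_neg, sub_self, zero_smul, exp_zero, one_mulVec] at hftc
  rw [hcomm]
  simpa using congr(-$hftc)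

end BackwardFlow

theorem stmt0_general (M : ℕ) (Qt : Matrix (Fin M) (Fin M) ℝ)
    (hrow : ∀ i, ∑ j, Qt i j = 0) (α : Fin M → ℝ) (Tt : ℝ)
    (φ : ℝ → Fin M → ℝ)
    (hφ : ∀ t, φ t = -∫ s in t..Tt, (NormedSpace.exp ((Tt - s) • Qt)).mulVec α) :
    φ Tt = 0 ∧ ∀ t i, HasDerivAt (fun u => φ u i)
      ((∑ j ∈ Finset.univ.erase i, Qt i j * (φ t i - φ t j)) + α i) t := by
  have hg := continuous_exp_sub_smul_mulVec Qt α Tt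
  refine ⟨by simp [hφ], fun t i => ?_⟩
  have hderiv : HasDerivAt φ (exp ((Tt - t) • Qt) *ᵥ α) t := by
    rw [funext hφ]
    simpa only [neg_neg] using (integral_hasDerivAt_left (hg.intervalIntegrable t Tt)
      (hg.stronglyMeasurableAtFilter _ _) hg.continuousAt).fun_neg
  have hflow : exp ((Tt - t) • Qt) *ᵥ α = α - Qt *ᵥ φ t := by
    rw [hφ t, mulVec_neg, mulVec_integral_exp_sub_smul_mulVec]
    abel
  rw [sum_erase_mul_sub_of_sum_row_eq_zero hrow, neg_add_eq_sub]
  simpa [hflow] using hasDerivAt_pi.1 hderiv i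

/-- Let `Q̃` be an `M×M` real matrix with zero row sums, `α ∈ ℝ^M`, `T̃ ∈ ℝ`.
Define `φ(t) = −∫_t^{T̃} exp(Q̃(T̃−s)) α ds` (matrix exponential).  Then `φ(T̃) = 0` and for
every `t` and `i`, `φ_i` is differentiable with
`φ_i'(t) = ∑_{j ≠ i} Q̃(i,j) (φ_i(t) − φ_j(t)) + α_i`. -/
theorem stmt0 (M : ℕ) (hM : 1 ≤ M) (Qt : Matrix (Fin M) (Fin M) ℝ)
    (hrow : ∀ i, ∑ j, Qt i j = 0) (α : Fin M → ℝ) (Tt : ℝ)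
    (φ : ℝ → Fin M → ℝ)
    (hφ : ∀ t, φ t = -∫ s in t..Tt, (NormedSpace.exp ((Tt - s) • Qt)).mulVec α) :
    φ Tt = 0 ∧ ∀ t i, HasDerivAt (fun u => φ u i)
      ((∑ j ∈ Finset.univ.erase i, Qt i j * (φ t i - φ t j)) + α i) t :=
  stmt0_general M Qt hrow α Tt φ hφ
end

section
/- Let λ̃_1, λ̃_2 ≥ 0 with λ̃_1 + λ̃_2 > 0, let α_1, α_2 ∈ ℝ, and let T̃ ∈ ℝ. For (i,j) ∈ {(1,2),(2,1)} define φ_i(t) = −(1/(λ̃_1+λ̃_2)) [ (λ̃_2 α_1 + λ̃_1 α_2)(T̃−t) + λ̃_i (α_i − α_j) (1 − e^{−(λ̃_1+λ̃_2)(T̃−t)})/(λ̃_1+λ̃_2) ]. Then φ_1(T̃) = φ_2(T̃) = 0 and for all t ∈ ℝ and (i,j) ∈ {(1,2),(2,1)}, φ_i'(t) = λ̃_i (φ_i(t) − φ_j(t)) + α_i. -/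
open Real

/-- The solution profile `-(1/L) [b (T - t) + k (1 - e^{-L (T - t)}) / L]`; in regime `i` of the
two-regime system, `L = λ̃₁ + λ̃₂`, `b = λ̃_j α_i + λ̃_i α_j` and `k = λ̃_i (α_i - α_j)`. -/
noncomputable def hjbProfile (L b k T t : ℝ) : ℝ :=
  -(1 / L) * (b * (T - t) + k * ((1 - exp (-L * (T - t))) / L))

@[simp]
lemma hjbProfile_self (L b k T : ℝ) : hjbProfile L b k T T = 0 := by
  simp [hjbProfile]

lemma hasDerivAt_hjbProfile {L : ℝ} (hL : L ≠ 0) (b k T t : ℝ) :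
    HasDerivAt (hjbProfile L b k T) ((b + k * exp (-L * (T - t))) / L) t := by
  have hexp : HasDerivAt (fun s => exp (-L * (T - s))) (exp (-L * (T - t)) * L) t := by
    simpa using (((hasDerivAt_id t).const_sub T).const_mul (-L)).exp
  have hlin : HasDerivAt (fun s => b * (T - s)) (-b) t := by
    simpa using ((hasDerivAt_id t).const_sub T).const_mul b
  refine ((hlin.add (((hexp.const_sub 1).div_const L).const_mul k)).const_mul (-(1 / L))).congr_deriv
    ?_
  field_simp
  ring

lemma hasDerivAt_hjbProfile_regime {li lj ai aj L b : ℝ} (hL : li + lj = L) (hL0 : L ≠ 0)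
    (hb : lj * ai + li * aj = b) (T t : ℝ) :
    HasDerivAt (hjbProfile L b (li * (ai - aj)) T)
      (li * (hjbProfile L b (li * (ai - aj)) T t - hjbProfile L b (lj * (aj - ai)) T t) + ai) t := by
  subst hL hb
  convert hasDerivAt_hjbProfile hL0 _ _ T t using 1
  simp only [hjbProfile]
  field_simp
  ring

theorem stmt1_general (l1 l2 : ℝ) (hpos : 0 < l1 + l2)
    (a1 a2 Tt : ℝ)
    (φ1 φ2 : ℝ → ℝ)
    (hφ1 : ∀ t, φ1 t = -(1 / (l1 + l2)) *
      ((l2 * a1 + l1 * a2) * (Tt - t) +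
        l1 * (a1 - a2) * ((1 - Real.exp (-(l1 + l2) * (Tt - t))) / (l1 + l2))))
    (hφ2 : ∀ t, φ2 t = -(1 / (l1 + l2)) *
      ((l2 * a1 + l1 * a2) * (Tt - t) +
        l2 * (a2 - a1) * ((1 - Real.exp (-(l1 + l2) * (Tt - t))) / (l1 + l2)))) :
    φ1 Tt = 0 ∧ φ2 Tt = 0 ∧
    (∀ t, HasDerivAt φ1 (l1 * (φ1 t - φ2 t) + a1) t) ∧
    (∀ t, HasDerivAt φ2 (l2 * (φ2 t - φ1 t) + a2) t) := by
  have hL : l1 + l2 ≠ 0 := hpos.ne'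
  have hφ1' : φ1 = hjbProfile (l1 + l2) (l2 * a1 + l1 * a2) (l1 * (a1 - a2)) Tt := funext hφ1
  have hφ2' : φ2 = hjbProfile (l1 + l2) (l2 * a1 + l1 * a2) (l2 * (a2 - a1)) Tt := funext hφ2
  subst hφ1' hφ2'
  refine ⟨hjbProfile_self .., hjbProfile_self .., fun t => ?_, fun t => ?_⟩
  · exact hasDerivAt_hjbProfile_regime rfl hL rfl Tt t
  · exact hasDerivAt_hjbProfile_regime (add_comm l2 l1) hL (add_comm _ _) Tt t

/-- Two-regime explicit solution of the reduced HJB ODE system.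
For `(i,j) ∈ {(1,2),(2,1)}`,
`φ_i(t) = −(1/(λ̃₁+λ̃₂)) [ (λ̃₂α₁+λ̃₁α₂)(T̃−t) + λ̃_i(α_i−α_j)(1−e^{−(λ̃₁+λ̃₂)(T̃−t)})/(λ̃₁+λ̃₂) ]`
satisfies `φ_i(T̃) = 0` and `φ_i'(t) = λ̃_i (φ_i(t) − φ_j(t)) + α_i`. -/
theorem stmt1 (l1 l2 : ℝ) (hl1 : 0 ≤ l1) (hl2 : 0 ≤ l2) (hpos : 0 < l1 + l2)
    (a1 a2 Tt : ℝ)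
    (φ1 φ2 : ℝ → ℝ)
    (hφ1 : ∀ t, φ1 t = -(1 / (l1 + l2)) *
      ((l2 * a1 + l1 * a2) * (Tt - t) +
        l1 * (a1 - a2) * ((1 - Real.exp (-(l1 + l2) * (Tt - t))) / (l1 + l2))))
    (hφ2 : ∀ t, φ2 t = -(1 / (l1 + l2)) *
      ((l2 * a1 + l1 * a2) * (Tt - t) +
        l2 * (a2 - a1) * ((1 - Real.exp (-(l1 + l2) * (Tt - t))) / (l1 + l2)))) :
    φ1 Tt = 0 ∧ φ2 Tt = 0 ∧
    (∀ t, HasDerivAt φ1 (l1 * (φ1 t - φ2 t) + a1) t) ∧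
    (∀ t, HasDerivAt φ2 (l2 * (φ2 t - φ1 t) + a2) t) :=
  stmt1_general l1 l2 hpos a1 a2 Tt φ1 φ2 hφ1 hφ2
end

section
/- Fix a finite index set J, constants γ > 0, ζ ∈ ℝ, w ∈ ℝ, ϕ₀ ∈ ℝ, and for each j ∈ J constants q̃_j > 0, q_j > 0, ϕ_j ∈ ℝ. Define f : ℝ × (J → ℝ) → ℝ by f(a, b) = (ζ a − ∑_{j∈J} q̃_j b_j) · γ e^{−γw+ϕ₀} − (a²/2) · γ² e^{−γw+ϕ₀} + ∑_{j∈J} q_j ( −e^{−γ(w+b_j)+ϕ_j} + e^{−γw+ϕ₀} ). Then f attains its global maximum at a* = ζ/γ and b_j* = −(1/γ)( log(q̃_j/q_j) + ϕ₀ − ϕ_j ); that is, f(a,b) ≤ f(a*, b*) for all (a,b) ∈ ℝ × (J → ℝ). -/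
/-!
The objective separates into a concave quadratic in `a` plus, for each `j`, a concave function
of `b j` alone, and each piece is maximised at its critical point. For the jump terms concavity
enters through the tangent-line bound `exp y * (x - y + 1) ≤ exp x`; at `b j = b_j*` the exponent
equals `-γ w + ϕ₀ + log (q̃_j / q_j)`, which is exactly the first-order condition
`γ q_j exp (…) = q̃_j γ e^{-γ w + ϕ₀}`.
-/

open Real Finset

lemma exp_mul_add_one_sub_le_exp (x y : ℝ) : exp y * (x - y + 1) ≤ exp x := by
  calc exp y * (x - y + 1) ≤ exp y * exp (x - y) := by
        gcongr
        linarith [add_one_le_exp (x - y)]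
    _ = exp x := by rw [← exp_add]; ring_nf

lemma neg_mul_sub_mul_exp_le {κ s q c b₀ : ℝ} (hq : 0 ≤ q)
    (hb₀ : κ * (q * exp (c - κ * b₀)) = s) (b : ℝ) :
    -(s * b) - q * exp (c - κ * b) ≤ -(s * b₀) - q * exp (c - κ * b₀) := by
  have tangent := mul_le_mul_of_nonneg_left
    (exp_mul_add_one_sub_le_exp (c - κ * b) (c - κ * b₀)) hq
  rw [← hb₀]
  linarith

lemma mul_mul_sub_sq_div_two_mul_le {γ E : ℝ} (hγ : γ ≠ 0) (hE : 0 ≤ E) (ζ a : ℝ) :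
    ζ * a * (γ * E) - a ^ 2 / 2 * (γ ^ 2 * E)
      ≤ ζ * (ζ / γ) * (γ * E) - (ζ / γ) ^ 2 / 2 * (γ ^ 2 * E) := by
  have gap : ζ * (ζ / γ) * (γ * E) - (ζ / γ) ^ 2 / 2 * (γ ^ 2 * E)
      - (ζ * a * (γ * E) - a ^ 2 / 2 * (γ ^ 2 * E)) = E * (γ * a - ζ) ^ 2 / 2 := by
    field_simp
    ring
  have : 0 ≤ E * (γ * a - ζ) ^ 2 / 2 := by positivity
  linarith

/-- The inner optimization of the HJB equation under exponential utility.
With `f(a,b) = (ζa − ∑_j q̃_j b_j)·γe^{−γw+ϕ₀} − (a²/2)·γ²e^{−γw+ϕ₀}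
  + ∑_j q_j(−e^{−γ(w+b_j)+ϕ_j} + e^{−γw+ϕ₀})`,
the global maximum is attained at `a* = ζ/γ` and
`b_j* = −(1/γ)(log(q̃_j/q_j) + ϕ₀ − ϕ_j)`. -/
theorem stmt6 (J : Type*) [Fintype J] (γ : ℝ) (hγ : 0 < γ) (ζ w ϕ0 : ℝ)
    (qt q : J → ℝ) (ϕ : J → ℝ) (hqt : ∀ j, 0 < qt j) (hq : ∀ j, 0 < q j)
    (f : ℝ → (J → ℝ) → ℝ)
    (hf : ∀ a b, f a b =
      (ζ * a - ∑ j, qt j * b j) * (γ * Real.exp (-γ * w + ϕ0))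
      - a ^ 2 / 2 * (γ ^ 2 * Real.exp (-γ * w + ϕ0))
      + ∑ j, q j * (-Real.exp (-γ * (w + b j) + ϕ j) + Real.exp (-γ * w + ϕ0))) :
    ∀ a b, f a b ≤ f (ζ / γ) (fun j => -(1 / γ) * (Real.log (qt j / q j) + ϕ0 - ϕ j)) := by
  intro a b
  set E := exp (-γ * w + ϕ0)
  set bs : J → ℝ := fun j => -(1 / γ) * (log (qt j / q j) + ϕ0 - ϕ j)
  have diffusion := mul_mul_sub_sq_div_two_mul_le hγ.ne' (exp_pos _).le ζ a (E := E)
  have jump (j : J) : -(qt j * γ * E * b j) - q j * exp (-γ * w + ϕ j - γ * b j)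
      ≤ -(qt j * γ * E * bs j) - q j * exp (-γ * w + ϕ j - γ * bs j) := by
    refine neg_mul_sub_mul_exp_le (hq j).le ?_ (b j)
    have optimal : exp (-γ * w + ϕ j - γ * bs j) = E * (qt j / q j) := by
      have exponent : -γ * w + ϕ j - γ * bs j = -γ * w + ϕ0 + log (qt j / q j) := by
        simp only [bs]
        field_simp
        ring
      rw [exponent, exp_add, exp_log (div_pos (hqt j) (hq j))]
    rw [optimal]
    field_simp [(hq j).ne']
  have jumps := sum_le_sum fun j (_ : j ∈ univ) => jump j
  have expand (a' : ℝ) (c : J → ℝ) : f a' c = ζ * a' * (γ * E) - a' ^ 2 / 2 * (γ ^ 2 * E)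
      + ∑ j, (-(qt j * γ * E * c j) - q j * exp (-γ * w + ϕ j - γ * c j)) + ∑ j, q j * E := by
    rw [hf]
    simp only [sub_mul, sum_sub_distrib, sum_neg_distrib, mul_add, sum_add_distrib, sum_mul]
    ring_nf
    rw [sum_neg_distrib]
    ring
  rw [expand, expand]
  linarith
end

section
/- Let Q̃ be an M×M real matrix with zero row sums and strictly positive off-diagonal entries q̃_{ij} > 0 (i ≠ j), let q_{ij} > 0 (i ≠ j), let ζ ∈ ℝ^M, γ > 0, and define α_i := ζ_i²/2 + ∑_{j≠i} ( q̃_{ij} log(q̃_{ij}/q_{ij}) − q̃_{ij} + q_{ij} ). Suppose φ : ℝ → ℝ^M is differentiable with φ_i'(t) = ∑_{j≠i} q̃_{ij}(φ_i(t) − φ_j(t)) + α_i for all i and t. Define u_i(t,w) = −e^{−γw+φ_i(t)}. Then for every i, t, and w, the function f(a,b) = (ζ_i a − ∑_{j≠i} q̃_{ij} b_j) ∂_w u_i(t,w) + (a²/2) ∂_{ww} u_i(t,w) + ∑_{j≠i} q_{ij}( u_j(t, w+b_j) − u_i(t,w) ) over (a,b) ∈ ℝ × ℝ^{M−1} has supremum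 attained at a* = ζ_i/γ, b_j* = −(1/γ)(log(q̃_{ij}/q_{ij}) + φ_i(t) − φ_j(t)), and ∂_t u_i(t,w) + f(a*, b*) = 0. In other words, u solves the HJB system ∂_t u_i + max_{(a,b)} f(a,b) = 0. -/
/-!
Factor `e^{−γw+φ_i(t)}` out of `f`. What is left separates into a concave quadratic in `a`,
maximised at `ζ_i/γ` with value `ζ_i²/2`, and one term per regime `j ≠ i` of the form
`p y − q e^y` in `y = −γ b_j − (φ_i − φ_j)`, whose maximum over `y` is the convex conjugate
`p log(p/q) − p` of `q e^y`, attained at `y = log(p/q)`. The maximal value is therefore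
`e^{−γw+φ_i}(∑_j q̃_{ij}(φ_i − φ_j) + α_i) = e^{−γw+φ_i} φ_i'`, which is exactly `−∂_t u_i`.
-/

open Real Finset

namespace HJBVerification

theorem mul_sub_mul_exp_le {p q : ℝ} (hp : 0 < p) (hq : 0 < q) (y : ℝ) :
    p * y - q * exp y ≤ p * log (p / q) - p := by
  have htangent := add_one_le_exp (y - log (p / q))
  rw [exp_sub, exp_log (div_pos hp hq), div_div_eq_mul_div, le_div_iff₀ hp] at htangent
  linarith

/-- The gain, per unit of `e^{−γw+φ_i}`, from holding jump exposure `b` to a switch into a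
regime with `φ_i − φ_j = d`, at pricing rate `p` and physical rate `q`. -/
noncomputable def jumpGain (γ p q d b : ℝ) : ℝ :=
  p * (-γ * b) + q * (1 - exp (-γ * b - d))

noncomputable def optimalJump (γ p q d : ℝ) : ℝ :=
  -(1 / γ) * (log (p / q) + d)

section jumpGain

variable {γ p q : ℝ}

theorem jumpGain_optimal (hγ : γ ≠ 0) (hp : 0 < p) (hq : 0 < q) (d : ℝ) :
    jumpGain γ p q d (optimalJump γ p q d) = p * log (p / q) - p + q + p * d := by
  have hexponent : -γ * optimalJump γ p q d - d = log (p / q) := by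
    unfold optimalJump; field_simp; ring
  rw [jumpGain, hexponent, exp_log (div_pos hp hq), mul_sub, mul_one,
    mul_div_cancel₀ p hq.ne']
  linear_combination p * hexponent

theorem jumpGain_le (hγ : γ ≠ 0) (hp : 0 < p) (hq : 0 < q) (d b : ℝ) :
    jumpGain γ p q d b ≤ jumpGain γ p q d (optimalJump γ p q d) := by
  rw [jumpGain_optimal hγ hp hq]
  have := mul_sub_mul_exp_le hp hq (-γ * b - d)
  unfold jumpGain
  linarith

end jumpGain

/-- The HJB objective `f(a, b)` divided by `e^{−γw+φ_i}`; `d j` stands for `φ_i − φ_j`. -/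
noncomputable def reducedHamiltonian {ι : Type*} [Fintype ι] (ζ γ : ℝ) (p q d : ι → ℝ) (a : ℝ)
    (b : ι → ℝ) : ℝ :=
  ζ * γ * a - γ ^ 2 * a ^ 2 / 2 + ∑ j, jumpGain γ (p j) (q j) (d j) (b j)

section reducedHamiltonian

variable {ι : Type*} [Fintype ι] {ζ γ : ℝ} {p q : ι → ℝ}

theorem reducedHamiltonian_optimal (hγ : γ ≠ 0) (hp : ∀ j, 0 < p j) (hq : ∀ j, 0 < q j)
    (d : ι → ℝ) :
    reducedHamiltonian ζ γ p q d (ζ / γ) (fun j => optimalJump γ (p j) (q j) (d j)) =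
      ζ ^ 2 / 2 + ∑ j, (p j * log (p j / q j) - p j + q j) + ∑ j, p j * d j := by
  simp only [reducedHamiltonian, jumpGain_optimal hγ (hp _) (hq _), sum_add_distrib]
  field_simp
  ring

theorem reducedHamiltonian_le (hγ : γ ≠ 0) (hp : ∀ j, 0 < p j) (hq : ∀ j, 0 < q j)
    (d : ι → ℝ) (a : ℝ) (b : ι → ℝ) :
    reducedHamiltonian ζ γ p q d a b ≤
      reducedHamiltonian ζ γ p q d (ζ / γ) (fun j => optimalJump γ (p j) (q j) (d j)) := by
  have hquadratic : ζ * γ * a - γ ^ 2 * a ^ 2 / 2 ≤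
      ζ * γ * (ζ / γ) - γ ^ 2 * (ζ / γ) ^ 2 / 2 := by
    have hvalue : ζ * γ * (ζ / γ) - γ ^ 2 * (ζ / γ) ^ 2 / 2 = ζ ^ 2 / 2 := by
      field_simp; ring
    nlinarith [sq_nonneg (γ * a - ζ)]
  exact add_le_add hquadratic (sum_le_sum fun j _ => jumpGain_le hγ (hp j) (hq j) (d j) (b j))

end reducedHamiltonian

end HJBVerification

open HJBVerification in
theorem stmt7_general (M : ℕ) (Qt : Matrix (Fin M) (Fin M) ℝ)
    (hoff : ∀ i j, i ≠ j → 0 < Qt i j)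
    (q : Fin M → Fin M → ℝ) (hq : ∀ i j, i ≠ j → 0 < q i j)
    (ζ : Fin M → ℝ) (γ : ℝ) (hγ : 0 < γ) (α : Fin M → ℝ)
    (hα : ∀ i, α i = ζ i ^ 2 / 2 +
      ∑ j ∈ Finset.univ.erase i, (Qt i j * Real.log (Qt i j / q i j) - Qt i j + q i j))
    (φ : ℝ → Fin M → ℝ)
    (hφ : ∀ i t, HasDerivAt (fun u => φ u i)
      ((∑ j ∈ Finset.univ.erase i, Qt i j * (φ t i - φ t j)) + α i) t)
    (u : Fin M → ℝ → ℝ → ℝ)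
    (hu : ∀ i t w, u i t w = -Real.exp (-γ * w + φ t i))
    (f : (i : Fin M) → ℝ → ℝ → ℝ → ({j : Fin M // j ≠ i} → ℝ) → ℝ)
    (hf : ∀ i t w a b, f i t w a b =
      (ζ i * a - ∑ j : {j : Fin M // j ≠ i}, Qt i (j : Fin M) * b j)
          * (γ * Real.exp (-γ * w + φ t i))
      + a ^ 2 / 2 * (-(γ ^ 2) * Real.exp (-γ * w + φ t i))
      + ∑ j : {j : Fin M // j ≠ i}, q i (j : Fin M) * (u (j : Fin M) t (w + b j) - u i t w)) :
    ∀ (i : Fin M) (t w : ℝ),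
      (∀ (a : ℝ) (b : {j : Fin M // j ≠ i} → ℝ),
        f i t w a b ≤ f i t w (ζ i / γ)
          (fun j => -(1 / γ) * (Real.log (Qt i (j : Fin M) / q i (j : Fin M))
            + φ t i - φ t (j : Fin M)))) ∧
      HasDerivAt (fun s => u i s w)
        (-(f i t w (ζ i / γ)
          (fun j => -(1 / γ) * (Real.log (Qt i (j : Fin M) / q i (j : Fin M))
            + φ t i - φ t (j : Fin M))))) t := by
  intro i t w
  have hQtj (j : {j : Fin M // j ≠ i}) : 0 < Qt i j := hoff i j (Ne.symm j.2)
  have hqj (j : {j : Fin M // j ≠ i}) : 0 < q i j := hq i j (Ne.symm j.2)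
  have hfactor (a : ℝ) (b : {j : Fin M // j ≠ i} → ℝ) : f i t w a b =
      exp (-γ * w + φ t i) * reducedHamiltonian (ζ i) γ (fun j : {j : Fin M // j ≠ i} => Qt i j)
        (fun j => q i j) (fun j => φ t i - φ t j) a b := by
    have hjump (j : Fin M) (c : ℝ) :
        u j t (w + c) - u i t w =
          exp (-γ * w + φ t i) * (1 - exp (-γ * c - (φ t i - φ t j))) := by
      rw [hu, hu, mul_sub, mul_one, ← exp_add]
      ring_nf
    simp only [hf, hjump, reducedHamiltonian, jumpGain, mul_add, mul_sum, sub_mul, sum_mul,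
      sum_add_distrib, neg_mul, mul_neg, sum_neg_distrib]
    ring_nf
  have hoptimal : (fun j : {j : Fin M // j ≠ i} =>
        -(1 / γ) * (log (Qt i j / q i j) + φ t i - φ t j)) =
      fun j : {j : Fin M // j ≠ i} => optimalJump γ (Qt i j) (q i j) (φ t i - φ t j) := by
    funext j; unfold optimalJump; ring
  have herase (g : Fin M → ℝ) : ∑ j ∈ univ.erase i, g j = ∑ j : {j : Fin M // j ≠ i}, g j :=
    sum_subtype _ (fun j => by simp) g
  refine ⟨fun a b => ?_, ?_⟩
  · rw [hfactor, hfactor, hoptimal]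
    exact mul_le_mul_of_nonneg_left (reducedHamiltonian_le hγ.ne' hQtj hqj _ a b) (exp_pos _).le
  · rw [hfactor, hoptimal, reducedHamiltonian_optimal hγ.ne' hQtj hqj, funext fun s => hu i s w]
    have hderiv := (((hφ i t).const_add (-γ * w)).exp).neg
    rw [hα, herase, herase, add_comm (∑ j : {j : Fin M // j ≠ i}, _)] at hderiv
    exact hderiv

/-- verification that `u_i(t,w) = −e^{−γw+φ_i(t)}` solves the HJB system
`∂_t u_i + max_{(a,b)} f(a,b) = 0`, where
`f(a,b) = (ζ_i a − ∑_{j≠i} q̃_{ij} b_j) ∂_w u_i + (a²/2) ∂_{ww} u_i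
          + ∑_{j≠i} q_{ij}(u_j(t,w+b_j) − u_i(t,w))`,
with the maximum attained at `a* = ζ_i/γ`,
`b_j* = −(1/γ)(log(q̃_{ij}/q_{ij}) + φ_i(t) − φ_j(t))`. -/
theorem stmt7 (M : ℕ) (hM : 2 ≤ M) (Qt : Matrix (Fin M) (Fin M) ℝ)
    (hrow : ∀ i, ∑ j, Qt i j = 0) (hoff : ∀ i j, i ≠ j → 0 < Qt i j)
    (q : Fin M → Fin M → ℝ) (hq : ∀ i j, i ≠ j → 0 < q i j)
    (ζ : Fin M → ℝ) (γ : ℝ) (hγ : 0 < γ) (α : Fin M → ℝ)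
    (hα : ∀ i, α i = ζ i ^ 2 / 2 +
      ∑ j ∈ Finset.univ.erase i, (Qt i j * Real.log (Qt i j / q i j) - Qt i j + q i j))
    (φ : ℝ → Fin M → ℝ)
    (hφ : ∀ i t, HasDerivAt (fun u => φ u i)
      ((∑ j ∈ Finset.univ.erase i, Qt i j * (φ t i - φ t j)) + α i) t)
    (u : Fin M → ℝ → ℝ → ℝ)
    (hu : ∀ i t w, u i t w = -Real.exp (-γ * w + φ t i))
    (f : (i : Fin M) → ℝ → ℝ → ℝ → ({j : Fin M // j ≠ i} → ℝ) → ℝ)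
    (hf : ∀ i t w a b, f i t w a b =
      (ζ i * a - ∑ j : {j : Fin M // j ≠ i}, Qt i (j : Fin M) * b j)
          * (γ * Real.exp (-γ * w + φ t i))
      + a ^ 2 / 2 * (-(γ ^ 2) * Real.exp (-γ * w + φ t i))
      + ∑ j : {j : Fin M // j ≠ i}, q i (j : Fin M) * (u (j : Fin M) t (w + b j) - u i t w)) :
    ∀ (i : Fin M) (t w : ℝ),
      (∀ (a : ℝ) (b : {j : Fin M // j ≠ i} → ℝ),
        f i t w a b ≤ f i t w (ζ i / γ)
          (fun j => -(1 / γ) * (Real.log (Qt i (j : Fin M) / q i (j : Fin M))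
            + φ t i - φ t (j : Fin M)))) ∧
      HasDerivAt (fun s => u i s w)
        (-(f i t w (ζ i / γ)
          (fun j => -(1 / γ) * (Real.log (Qt i (j : Fin M) / q i (j : Fin M))
            + φ t i - φ t (j : Fin M))))) t :=
  stmt7_general M Qt hoff q hq ζ γ hγ α hα φ hφ u hu f hf
end

section
/- Let Q̃ be an M×M real matrix with zero row sums, let μ, σ ∈ ℝ^M with σ_i ≠ 0 for a fixed regime i, and for each k = 1,…,M let g^{(k)} : ℝ → ℝ^M be differentiable with (g^{(k)}_l)'(t) + (μ_l + σ_l²/2) g^{(k)}_l(t) + ∑_{m≠l} Q̃(l,m) ( g^{(k)}_m(t) − g^{(k)}_l(t) ) = 0 for every l and t. Define the M×M matrix Γ(t) whose (i,k) entry is σ_i g^{(k)}_i(t) and whose (j,k) entry for j ≠ i is g^{(k)}_j(t) − g^{(k)}_i(t). Then for all t, t₀ ∈ ℝ: det Γ(t) = exp( −∑_{k=1}^M ( μ_k + σ_k²/2 + Q̃(k,k) ) (t − t₀) ) · det Γ(t₀). -/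
/-!
Write `G(t)` for the matrix `(g^{(k)}_l(t))_{l,k}`. Because the rows of `Q̃` sum to zero,
`∑_{m ≠ l} Q̃(l,m) (g_m − g_l) = (Q̃ g)_l`, so the ODE reads `G' = B G` with the constant matrix
`B = −(diag(μ + σ²/2) + Q̃)`. Jacobi's formula gives `(det G)' = tr B · det G`, hence Liouville's
formula `det G(t) = exp(tr B · (t − t₀)) det G(t₀)`. Finally `Γ(t) = P G(t)` for a constant
matrix `P`, so `det Γ = det P · det G` satisfies the same identity.
-/

open Matrix Finset

theorem Real.eq_exp_mul_sub_mul_of_hasDerivAt_mul {f : ℝ → ℝ} {c : ℝ}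
    (hf : ∀ t, HasDerivAt f (c * f t) t) (t t₀ : ℝ) :
    f t = Real.exp (c * (t - t₀)) * f t₀ := by
  set φ : ℝ → ℝ := fun u => Real.exp (-c * (u - t₀)) * f u
  have hφ : ∀ u, HasDerivAt φ 0 u := fun u => by
    refine ((((hasDerivAt_id' u).sub_const t₀).const_mul (-c)).exp.mul (hf u)).congr_deriv ?_
    ring
  have hconst : φ t = φ t₀ :=
    is_const_of_deriv_eq_zero (fun u => (hφ u).differentiableAt) (fun u => (hφ u).deriv) t t₀
  simp only [φ, sub_self, mul_zero, Real.exp_zero, one_mul] at hconst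
  rw [← hconst, ← mul_assoc, ← Real.exp_add, neg_mul, add_neg_cancel, Real.exp_zero, one_mul]

namespace Matrix

variable {n : Type*} [Fintype n] [DecidableEq n]

theorem sum_erase_mul_sub_eq_mulVec {R : Type*} [CommRing R] {Q : Matrix n n R}
    (hrow : ∀ l, ∑ m, Q l m = 0) (v : n → R) (l : n) :
    ∑ m ∈ univ.erase l, Q l m * (v m - v l) = (Q *ᵥ v) l := by
  rw [sum_erase _ (by simp), mulVec, dotProduct]
  simp [mul_sub, sum_sub_distrib, ← sum_mul, hrow]

noncomputable def detRowContinuousMultilinear :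
    ContinuousMultilinearMap ℝ (fun _ : n => n → ℝ) ℝ :=
  ⟨detRowAlternating.toMultilinearMap, continuous_id.matrix_det⟩

theorem hasDerivAt_det {A : ℝ → Matrix n n ℝ} {A' : Matrix n n ℝ} {t : ℝ}
    (h : ∀ r, HasDerivAt (fun u => A u r) (A' r) t) :
    HasDerivAt (fun u => (A u).det) (∑ r, ((A t).updateRow r (A' r)).det) t := by
  refine (HasFDerivAt.multilinear_comp detRowContinuousMultilinear
    fun r => (h r).hasFDerivAt).hasDerivAt.congr_deriv ?_
  simp only [FunLike.coe_sum, Finset.sum_apply, ContinuousLinearMap.comp_apply,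
    ContinuousLinearMap.toSpanSingleton_apply, one_smul,
    ContinuousMultilinearMap.toContinuousLinearMap_apply]
  rfl

theorem hasDerivAt_det_of_hasDerivAt_mul {A : ℝ → Matrix n n ℝ} {B : Matrix n n ℝ} {t : ℝ}
    (h : ∀ r, HasDerivAt (fun u => A u r) ((B * A t) r) t) :
    HasDerivAt (fun u => (A u).det) (B.trace * (A t).det) t := by
  refine (hasDerivAt_det h).congr_deriv ?_
  have hrow : ∀ r, (B * A t) r = ∑ m, B r m • A t m := fun r => by
    ext k; simp [mul_apply, Finset.sum_apply]
  simp only [hrow, det_updateRow_sum, smul_eq_mul, trace, diag, Finset.sum_mul]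

theorem det_eq_exp_trace_mul_det_of_hasDerivAt_mul {A : ℝ → Matrix n n ℝ} {B : Matrix n n ℝ}
    (h : ∀ t r, HasDerivAt (fun u => A u r) ((B * A t) r) t) (t t₀ : ℝ) :
    (A t).det = Real.exp (B.trace * (t - t₀)) * (A t₀).det :=
  Real.eq_exp_mul_sub_mul_of_hasDerivAt_mul (fun t => hasDerivAt_det_of_hasDerivAt_mul (h t)) t t₀

end Matrix

theorem stmt8_general (M : ℕ) (Qt : Matrix (Fin M) (Fin M) ℝ)
    (hrow : ∀ l, ∑ m, Qt l m = 0)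
    (μ σ : Fin M → ℝ) (i : Fin M)
    (g : Fin M → ℝ → Fin M → ℝ)
    (hg : ∀ k l t, HasDerivAt (fun u => g k u l)
      (-((μ l + σ l ^ 2 / 2) * g k t l
        + ∑ m ∈ Finset.univ.erase l, Qt l m * (g k t m - g k t l))) t)
    (Γ : ℝ → Matrix (Fin M) (Fin M) ℝ)
    (hΓ : ∀ t r k, Γ t r k = if r = i then σ i * g k t i else g k t r - g k t i) :
    ∀ t t₀ : ℝ, (Γ t).det =
      Real.exp (-(∑ k, (μ k + σ k ^ 2 / 2 + Qt k k)) * (t - t₀)) * (Γ t₀).det := by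
  intro t t₀
  let G : ℝ → Matrix (Fin M) (Fin M) ℝ := fun t => of fun l k => g k t l
  let B : Matrix (Fin M) (Fin M) ℝ := -(diagonal (fun l => μ l + σ l ^ 2 / 2) + Qt)
  have hG : ∀ t l, HasDerivAt (fun u => G u l) ((B * G t) l) t := fun t l =>
    hasDerivAt_pi.2 fun k => (hg k l t).congr_deriv <| by
      simp [B, G, sum_erase_mul_sub_eq_mulVec hrow, mul_apply, mulVec, dotProduct, diagonal_apply,
        add_mul, sum_add_distrib]
  obtain ⟨P, hP⟩ : ∃ P, ∀ t, Γ t = P * G t :=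
    ⟨of fun r m => if r = i then (if m = i then σ i else 0)
      else (if m = r then 1 else 0) - (if m = i then 1 else 0),
     fun t => by
      ext r k
      by_cases hr : r = i <;> simp [hΓ, hr, mul_apply, G, sub_mul, sum_sub_distrib]⟩
  have htrace : B.trace = -∑ k, (μ k + σ k ^ 2 / 2 + Qt k k) := by
    simp [B, trace, sum_add_distrib]
  rw [hP, hP, det_mul, det_mul, det_eq_exp_trace_mul_det_of_hasDerivAt_mul hG t t₀, htrace]
  ring

/-- Under the RS-GBM model, the determinant of the coefficient matrix `Γ(t)`
(with diffusion row `σ_i g^{(k)}_i(t)` and jump rows `g^{(k)}_j(t) − g^{(k)}_i(t)`, `j ≠ i`)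
satisfies `det Γ(t) = exp(−∑_k (μ_k + σ_k²/2 + Q̃(k,k))(t − t₀)) det Γ(t₀)`. -/
theorem stmt8 (M : ℕ) (hM : 1 ≤ M) (Qt : Matrix (Fin M) (Fin M) ℝ)
    (hrow : ∀ l, ∑ m, Qt l m = 0)
    (μ σ : Fin M → ℝ) (i : Fin M) (hσ : σ i ≠ 0)
    (g : Fin M → ℝ → Fin M → ℝ)
    (hg : ∀ k l t, HasDerivAt (fun u => g k u l)
      (-((μ l + σ l ^ 2 / 2) * g k t l
        + ∑ m ∈ Finset.univ.erase l, Qt l m * (g k t m - g k t l))) t)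
    (Γ : ℝ → Matrix (Fin M) (Fin M) ℝ)
    (hΓ : ∀ t r k, Γ t r k = if r = i then σ i * g k t i else g k t r - g k t i) :
    ∀ t t₀ : ℝ, (Γ t).det =
      Real.exp (-(∑ k, (μ k + σ k ^ 2 / 2 + Qt k k)) * (t - t₀)) * (Γ t₀).det :=
  stmt8_general M Qt hrow μ σ i g hg Γ hΓ
end

section
/- Let Q̃ be an M×M real matrix with zero row sums, let μ, σ ∈ ℝ^M with σ_i ≠ 0 for a fixed regime i, and for each k = 1,…,M let g^{(k)} : ℝ → ℝ^M be differentiable with (g^{(k)}_l)'(t) + (μ_l + σ_l²/2) g^{(k)}_l(t) + ∑_{m≠l} Q̃(l,m) ( g^{(k)}_m(t) − g^{(k)}_l(t) ) = 0 for every l and t. Define the M×M matrix Γ(t) whose (i,k) entry is σ_i g^{(k)}_i(t) and whose (j,k) entry for j ≠ i is g^{(k)}_j(t) − g^{(k)}_i(t). If Γ(t₀) is invertible for some t₀ ∈ ℝ, then Γ(t) is invertible for every t ∈ ℝ. -/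
/-!
Stack the solutions `g⁽ᵏ⁾(t)` as the columns of a matrix `G(t)`. The futures ODE is linear,
`g' = B g` for a constant generator `B`, so `G' = B G` and `exp (-t • B) * G t` is constant in `t`:
invertibility of `G` at one time propagates to all times. Finally `Γ(t) = S * G(t)` for a constant
row-operation matrix `S`, so `Γ(t₀)` invertible forces `S` and `G(t₀)` invertible, hence `Γ(t)` too.
-/

open Finset Matrix NormedSpace

section LinearODE

variable {𝕂 𝔸 : Type*} [RCLike 𝕂] [NormedRing 𝔸] [NormedAlgebra 𝕂 𝔸] [CompleteSpace 𝔸]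

theorem exp_neg_smul_mul_eq_of_hasDerivAt (B : 𝔸) {G : 𝕂 → 𝔸}
    (hG : ∀ u, HasDerivAt G (B * G u) u) (s t : 𝕂) :
    exp (-t • B) * G t = exp (-s • B) * G s := by
  have hE (u : 𝕂) : HasDerivAt (fun v : 𝕂 => exp (-v • B)) (-(B * exp (-u • B))) u := by
    simpa [Function.comp_def] using
      (hasDerivAt_exp_smul_const' (𝕂 := 𝕂) B (-u)).scomp u (hasDerivAt_neg u)
  have h0 (u : 𝕂) : HasDerivAt (fun v => exp (-v • B) * G v) 0 u := by
    have hcomm : Commute (exp (-u • B)) B := ((Commute.refl B).smul_left (-u)).exp_left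
    refine ((hE u).mul (hG u)).congr_deriv ?_
    rw [← mul_assoc, hcomm.eq, neg_mul, neg_add_cancel]
  exact is_const_of_deriv_eq_zero (fun u => (h0 u).differentiableAt) (fun u => (h0 u).deriv) t s

theorem isUnit_of_hasDerivAt_mul_left (B : 𝔸) {G : 𝕂 → 𝔸}
    (hG : ∀ u, HasDerivAt G (B * G u) u) {s : 𝕂} (hs : IsUnit (G s)) (t : 𝕂) :
    IsUnit (G t) := by
  have hexp (x : 𝔸) : IsUnit (exp x) :=
    isUnit_exp_of_mem_ball (𝕂 := 𝕂) <| (expSeries_radius_eq_top 𝕂 𝔸).symm ▸ edist_lt_top _ _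
  rw [← (hexp (-t • B)).unit.isUnit_units_mul, IsUnit.unit_spec,
    exp_neg_smul_mul_eq_of_hasDerivAt B hG s t]
  exact (hexp _).mul hs

end LinearODE

variable {n : Type*} [Fintype n] [DecidableEq n]

section MatrixODE

attribute [local instance] Matrix.linftyOpNormedRing Matrix.linftyOpNormedAlgebra

theorem Matrix.isUnit_of_hasDerivAt_apply_mul_left {𝕂 : Type*} [RCLike 𝕂] (B : Matrix n n 𝕂)
    {G : 𝕂 → Matrix n n 𝕂} (hG : ∀ u l k, HasDerivAt (fun v => G v l k) ((B * G u) l k) u)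
    {s : 𝕂} (hs : IsUnit (G s)) (t : 𝕂) : IsUnit (G t) :=
  isUnit_of_hasDerivAt_mul_left B (fun u => hasDerivAt_pi.mpr fun l => hasDerivAt_pi.mpr (hG u l))
    hs t

end MatrixODE

theorem Matrix.sum_erase_mul_sub {R : Type*} [CommRing R] (Q : Matrix n n R) (x : n → R) (l : n) :
    ∑ m ∈ univ.erase l, Q l m * (x m - x l) = (Q *ᵥ x) l - (∑ m, Q l m) * x l := by
  rw [sum_erase _ (by rw [sub_self, mul_zero]), sum_mul, mulVec, dotProduct, ← sum_sub_distrib]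
  simp only [mul_sub]

/-- The futures ODE reads `g' = rsgbmGenerator Q μ σ *ᵥ g`; the diagonal of `Q` cancels out. -/
noncomputable def rsgbmGenerator (Q : Matrix n n ℝ) (μ σ : n → ℝ) : Matrix n n ℝ :=
  diagonal (fun l => ∑ m, Q l m - (μ l + σ l ^ 2 / 2)) - Q

theorem rsgbmGenerator_mulVec_apply (Q : Matrix n n ℝ) (μ σ x : n → ℝ) (l : n) :
    (rsgbmGenerator Q μ σ *ᵥ x) l =
      -((μ l + σ l ^ 2 / 2) * x l + ∑ m ∈ univ.erase l, Q l m * (x m - x l)) := by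
  rw [sum_erase_mul_sub, rsgbmGenerator, sub_mulVec, Pi.sub_apply, mulVec_diagonal]
  ring

def rowTransform {R : Type*} [Ring R] (c : R) (i : n) : Matrix n n R :=
  of fun r => if r = i then c • Pi.single i 1 else Pi.single r 1 - Pi.single i 1

theorem rowTransform_mul_apply {R : Type*} [Ring R] (c : R) (i : n) (A : Matrix n n R)
    (r k : n) : (rowTransform c i * A) r k = if r = i then c * A i k else A r k - A i k := by
  split_ifs with hr <;>
    simp [rowTransform, hr, mul_apply, sub_mul, sum_sub_distrib, Pi.single_apply]

theorem stmt9_general (M : ℕ) (Qt : Matrix (Fin M) (Fin M) ℝ)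
    (μ σ : Fin M → ℝ) (i : Fin M)
    (g : Fin M → ℝ → Fin M → ℝ)
    (hg : ∀ k l t, HasDerivAt (fun u => g k u l)
      (-((μ l + σ l ^ 2 / 2) * g k t l
        + ∑ m ∈ Finset.univ.erase l, Qt l m * (g k t m - g k t l))) t)
    (Γ : ℝ → Matrix (Fin M) (Fin M) ℝ)
    (hΓ : ∀ t r k, Γ t r k = if r = i then σ i * g k t i else g k t r - g k t i)
    (t₀ : ℝ) (h₀ : IsUnit (Γ t₀)) :
    ∀ t : ℝ, IsUnit (Γ t) := by
  set G : ℝ → Matrix (Fin M) (Fin M) ℝ := fun u => of fun l k => g k u l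
  have hΓG : Γ = fun u => rowTransform (σ i) i * G u := by
    ext u r k
    rw [hΓ, rowTransform_mul_apply]
    rfl
  have hG (u : ℝ) (l k : Fin M) :
      HasDerivAt (fun v => G v l k) ((rsgbmGenerator Qt μ σ * G u) l k) u := by
    exact (hg k l u).congr_deriv (rsgbmGenerator_mulVec_apply Qt μ σ (g k u) l).symm
  subst hΓG
  obtain ⟨hS, hG₀⟩ := IsUnit.mul_iff.mp h₀
  exact fun t => hS.mul (isUnit_of_hasDerivAt_apply_mul_left _ hG hG₀ t)

/-- Under the RS-GBM model, if the coefficient matrix `Γ(t₀)` is invertible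
for some time `t₀`, then `Γ(t)` is invertible for every time `t`. -/
theorem stmt9 (M : ℕ) (hM : 1 ≤ M) (Qt : Matrix (Fin M) (Fin M) ℝ)
    (hrow : ∀ l, ∑ m, Qt l m = 0)
    (μ σ : Fin M → ℝ) (i : Fin M) (hσ : σ i ≠ 0)
    (g : Fin M → ℝ → Fin M → ℝ)
    (hg : ∀ k l t, HasDerivAt (fun u => g k u l)
      (-((μ l + σ l ^ 2 / 2) * g k t l
        + ∑ m ∈ Finset.univ.erase l, Qt l m * (g k t m - g k t l))) t)
    (Γ : ℝ → Matrix (Fin M) (Fin M) ℝ)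
    (hΓ : ∀ t r k, Γ t r k = if r = i then σ i * g k t i else g k t r - g k t i)
    (t₀ : ℝ) (h₀ : IsUnit (Γ t₀)) :
    ∀ t : ℝ, IsUnit (Γ t) :=
  stmt9_general M Qt μ σ i g hg Γ hΓ t₀ h₀
end

section
/- Let Q̃ be an M×M real matrix, let κ ≠ 0, θ, σ ∈ ℝ^M, T ∈ ℝ, and let h : ℝ → ℝ^M be differentiable with h_i'(t) + ( κ θ_i e^{−κ(T−t)} + (σ_i²/2) e^{−2κ(T−t)} ) h_i(t) + ∑_{j≠i} Q̃(i,j) ( h_j(t) − h_i(t) ) = 0 for every i and t, and h_i(T) = 1. Define F_i(t,x) = exp( e^{−κ(T−t)} x ) h_i(t). Then F_i(T,x) = e^x for all x, and for every i, t, and x: ∂_t F_i(t,x) + κ(θ_i − x) ∂_x F_i(t,x) + (σ_i²/2) ∂_{xx} F_i(t,x) + ∑_{j≠i} Q̃(i,j) ( F_j(t,x) − F_i(t,x) ) = 0. -/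
/-!
Along the ansatz `F_i(t,x) = exp(E(t) x) h_i(t)` with `E(t) = e^{−κ(T−t)}`, one has `E' = κE`,
`∂_x F_i = E F_i` and `∂_{xx} F_i = E² F_i`, while `∂_t F_i = exp(E x)(κ E x h_i + h_i')`.
The `x`-dependent terms `κ E x F_i` and `−κ x E F_i` cancel, and since `e^{−2κ(T−t)} = E²` what
remains is `exp(E x)` times the left-hand side of the ODE for `h_i`, which vanishes.
-/

open Real

lemma hasDerivAt_exp_mul_mul_const (c k x : ℝ) :
    HasDerivAt (fun y => exp (c * y) * k) (c * (exp (c * x) * k)) x := by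
  have := (((hasDerivAt_id' x).const_mul c).exp).mul_const k
  exact this.congr_deriv (by ring)

lemma deriv_exp_mul_mul_const (c k : ℝ) :
    deriv (fun y => exp (c * y) * k) = fun y => c * (exp (c * y) * k) :=
  funext fun x => (hasDerivAt_exp_mul_mul_const c k x).deriv

lemma deriv_deriv_exp_mul_mul_const (c k x : ℝ) :
    deriv (deriv fun y => exp (c * y) * k) x = c ^ 2 * (exp (c * x) * k) := by
  rw [deriv_exp_mul_mul_const, ((hasDerivAt_exp_mul_mul_const c k x).const_mul c).deriv]
  ring

lemma hasDerivAt_exp_neg_mul_sub (κ T t : ℝ) :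
    HasDerivAt (fun u => exp (-κ * (T - u))) (κ * exp (-κ * (T - t))) t := by
  have := (((hasDerivAt_id' t).const_sub T).const_mul (-κ)).exp
  exact this.congr_deriv (by ring)

lemma hasDerivAt_exp_exp_neg_mul_sub_mul {g : ℝ → ℝ} {g' : ℝ} (κ T t x : ℝ)
    (hg : HasDerivAt g g' t) :
    HasDerivAt (fun u => exp (exp (-κ * (T - u)) * x) * g u)
      (exp (exp (-κ * (T - t)) * x) * (κ * exp (-κ * (T - t)) * x * g t + g')) t := by
  have := (((hasDerivAt_exp_neg_mul_sub κ T t).mul_const x).exp).mul hg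
  exact this.congr_deriv (by ring)

lemma exp_neg_two_mul_mul_sub (κ T t : ℝ) :
    exp (-2 * κ * (T - t)) = exp (-κ * (T - t)) ^ 2 := by
  rw [← exp_nat_mul]
  congr 1
  push_cast
  ring

theorem stmt14_general (M : ℕ) (Qt : Matrix (Fin M) (Fin M) ℝ)
    (κ : ℝ) (θ σ : Fin M → ℝ) (T : ℝ)
    (h : ℝ → Fin M → ℝ)
    (hh : ∀ i t, HasDerivAt (fun u => h u i)
      (-((κ * θ i * Real.exp (-κ * (T - t)) + σ i ^ 2 / 2 * Real.exp (-2 * κ * (T - t)))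
          * h t i
        + ∑ j ∈ Finset.univ.erase i, Qt i j * (h t j - h t i))) t)
    (hhT : ∀ i, h T i = 1)
    (F : Fin M → ℝ → ℝ → ℝ)
    (hF : ∀ i t x, F i t x = Real.exp (Real.exp (-κ * (T - t)) * x) * h t i) :
    (∀ i x, F i T x = Real.exp x) ∧
    ∀ i t x,
      deriv (fun u => F i u x) t
      + κ * (θ i - x) * deriv (fun y => F i t y) x
      + σ i ^ 2 / 2 * deriv (deriv (fun y => F i t y)) x
      + ∑ j ∈ Finset.univ.erase i, Qt i j * (F j t x - F i t x) = 0 := by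
  obtain rfl : F = fun i t x => exp (exp (-κ * (T - t)) * x) * h t i :=
    funext fun i => funext fun t => funext fun x => hF i t x
  refine ⟨fun i x => by simp [hhT i], fun i t x => ?_⟩
  set E := exp (-κ * (T - t))
  have hsum : ∑ j ∈ Finset.univ.erase i, Qt i j * (exp (E * x) * h t j - exp (E * x) * h t i)
      = exp (E * x) * ∑ j ∈ Finset.univ.erase i, Qt i j * (h t j - h t i) := by
    rw [Finset.mul_sum]
    exact Finset.sum_congr rfl fun j _ => by ring
  rw [(hasDerivAt_exp_exp_neg_mul_sub_mul κ T t x (hh i t)).deriv,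
    (hasDerivAt_exp_mul_mul_const E (h t i) x).deriv, deriv_deriv_exp_mul_mul_const, hsum,
    exp_neg_two_mul_mul_sub]
  ring

/-- RS-XOU with common mean-reversion speed `κ ≠ 0`.  If `h` solves
`h_i' + (κθ_i e^{−κ(T−t)} + (σ_i²/2)e^{−2κ(T−t)}) h_i + ∑_{j≠i} Q̃(i,j)(h_j − h_i) = 0`
with `h_i(T) = 1`, then `F_i(t,x) = exp(e^{−κ(T−t)}x) h_i(t)` satisfies `F_i(T,x) = e^x`
and the pricing PDE
`∂_t F_i + κ(θ_i − x)∂_x F_i + (σ_i²/2)∂_{xx}F_i + ∑_{j≠i} Q̃(i,j)(F_j − F_i) = 0`. -/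
theorem stmt14 (M : ℕ) (hM : 1 ≤ M) (Qt : Matrix (Fin M) (Fin M) ℝ)
    (κ : ℝ) (hκ : κ ≠ 0) (θ σ : Fin M → ℝ) (T : ℝ)
    (h : ℝ → Fin M → ℝ)
    (hh : ∀ i t, HasDerivAt (fun u => h u i)
      (-((κ * θ i * Real.exp (-κ * (T - t)) + σ i ^ 2 / 2 * Real.exp (-2 * κ * (T - t)))
          * h t i
        + ∑ j ∈ Finset.univ.erase i, Qt i j * (h t j - h t i))) t)
    (hhT : ∀ i, h T i = 1)
    (F : Fin M → ℝ → ℝ → ℝ)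
    (hF : ∀ i t x, F i t x = Real.exp (Real.exp (-κ * (T - t)) * x) * h t i) :
    (∀ i x, F i T x = Real.exp x) ∧
    ∀ i t x,
      deriv (fun u => F i u x) t
      + κ * (θ i - x) * deriv (fun y => F i t y) x
      + σ i ^ 2 / 2 * deriv (deriv (fun y => F i t y)) x
      + ∑ j ∈ Finset.univ.erase i, Qt i j * (F j t x - F i t x) = 0 :=
  stmt14_general M Qt κ θ σ T h hh hhT F hF
end

section
/- Let κ ≠ 0, θ, σ ∈ ℝ, s ∈ ℝ, and let Ĝ : ℝ → ℂ be differentiable. Define F̂ : ℝ × ℝ → ℂ by F̂(t,ω) = exp( κ(s−t) − θ i ω (1 − e^{κ(s−t)}) + (σ²ω²/(4κ)) (1 − e^{2κ(s−t)}) ) · Ĝ( e^{κ(s−t)} ω ), where i is the imaginary unit. Then F̂(s,ω) = Ĝ(ω) for all ω, and for all t and ω: ∂_t F̂(t,ω) + κ ω ∂_ω F̂(t,ω) + ( κ θ i ω + κ − ω²σ²/2 ) F̂(t,ω) = 0. -/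
/-!
Along the characteristics `ω e^{κ(s−t)} = const` of the transport operator `∂_t + κω ∂_ω`, the
factor `Ĝ(e^{κ(s−t)} ω)` is constant, so the operator only sees the exponential prefactor; by the
Leibniz rule it multiplies `F̂` by the transport derivative of the exponent, which is exactly
`−(κθiω + κ − ω²σ²/2)`. At `t = s` the exponent vanishes and the argument of `Ĝ` is `ω`.
-/

open Complex

noncomputable def transportDeriv (κ : ℝ) (f : ℝ → ℝ → ℂ) (t ω : ℝ) : ℂ :=
  deriv (fun u => f u ω) t + ((κ * ω : ℝ) : ℂ) * deriv (fun v => f t v) ω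

theorem transportDeriv_cexp_mul {κ t ω : ℝ} {P H : ℝ → ℝ → ℂ}
    (hPt : DifferentiableAt ℝ (P · ω) t) (hPω : DifferentiableAt ℝ (P t ·) ω)
    (hHt : DifferentiableAt ℝ (H · ω) t) (hHω : DifferentiableAt ℝ (H t ·) ω) :
    transportDeriv κ (fun t ω => exp (P t ω) * H t ω) t ω
      = exp (P t ω) * (transportDeriv κ P t ω * H t ω + transportDeriv κ H t ω) := by
  have ht : HasDerivAt (fun u => exp (P u ω) * H u ω) _ t :=
    hPt.hasDerivAt.cexp.mul hHt.hasDerivAt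
  have hω : HasDerivAt (fun v => exp (P t v) * H t v) _ ω :=
    hPω.hasDerivAt.cexp.mul hHω.hasDerivAt
  simp only [transportDeriv, ht.deriv, hω.deriv]
  ring

theorem hasDerivAt_exp_mul_sub (κ s t : ℝ) :
    HasDerivAt (fun u => Real.exp (κ * (s - u))) (-κ * Real.exp (κ * (s - t))) t := by
  simpa [mul_comm] using (((hasDerivAt_id t).const_sub s).const_mul κ).exp

section Characteristic

variable {κ s t ω : ℝ} {G : ℝ → ℂ}

theorem hasDerivAt_comp_characteristic_time
    (hG : DifferentiableAt ℝ G (Real.exp (κ * (s - t)) * ω)) :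
    HasDerivAt (fun u => G (Real.exp (κ * (s - u)) * ω))
      ((-κ * Real.exp (κ * (s - t)) * ω) • deriv G (Real.exp (κ * (s - t)) * ω)) t :=
  hG.hasDerivAt.scomp t ((hasDerivAt_exp_mul_sub κ s t).mul_const ω)

theorem hasDerivAt_comp_characteristic_freq
    (hG : DifferentiableAt ℝ G (Real.exp (κ * (s - t)) * ω)) :
    HasDerivAt (fun v => G (Real.exp (κ * (s - t)) * v))
      (Real.exp (κ * (s - t)) • deriv G (Real.exp (κ * (s - t)) * ω)) ω :=
  hG.hasDerivAt.scomp ω ((hasDerivAt_id ω).const_mul _ |>.congr_deriv (mul_one _))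

theorem transportDeriv_comp_characteristic
    (hG : DifferentiableAt ℝ G (Real.exp (κ * (s - t)) * ω)) :
    transportDeriv κ (fun t ω => G (Real.exp (κ * (s - t)) * ω)) t ω = 0 := by
  simp only [transportDeriv, (hasDerivAt_comp_characteristic_time hG).deriv,
    (hasDerivAt_comp_characteristic_freq hG).deriv, Complex.real_smul]
  push_cast
  ring

end Characteristic

section Exponent

variable (κ θ σ s : ℝ)

noncomputable def fstExponent (t ω : ℝ) : ℂ :=
  (κ * (s - t) : ℝ)
    - (θ : ℂ) * I * (ω : ℂ) * (1 - (Real.exp (κ * (s - t)) : ℝ))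
    + ((σ ^ 2 * ω ^ 2 / (4 * κ) : ℝ) : ℂ) * (1 - (Real.exp (2 * κ * (s - t)) : ℝ))

theorem hasDerivAt_fstExponent_time (t ω : ℝ) :
    HasDerivAt (fun u => fstExponent κ θ σ s u ω)
      (-κ - θ * I * ω * (κ * Real.exp (κ * (s - t)))
        + ((σ ^ 2 * ω ^ 2 / (4 * κ) : ℝ) : ℂ) * (2 * κ * Real.exp (2 * κ * (s - t)))) t := by
  have hE := (hasDerivAt_exp_mul_sub κ s t).ofReal_comp
  have hE2 := (hasDerivAt_exp_mul_sub (2 * κ) s t).ofReal_comp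
  have hlin : HasDerivAt (fun u : ℝ => ((κ * (s - u) : ℝ) : ℂ)) (-κ : ℝ) t :=
    (((hasDerivAt_id t).const_sub s).const_mul κ).ofReal_comp.congr_deriv (by simp)
  exact ((hlin.sub ((hE.const_sub 1).const_mul ((θ : ℂ) * I * ω))).add
    ((hE2.const_sub 1).const_mul ((σ ^ 2 * ω ^ 2 / (4 * κ) : ℝ) : ℂ))).congr_deriv
    (by push_cast; ring)

theorem hasDerivAt_fstExponent_freq (t ω : ℝ) :
    HasDerivAt (fun v => fstExponent κ θ σ s t v)
      (-(θ * I * (1 - Real.exp (κ * (s - t))))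
        + ((σ ^ 2 * (2 * ω) / (4 * κ) : ℝ) : ℂ) * (1 - Real.exp (2 * κ * (s - t)))) ω := by
  have hω : HasDerivAt (fun v : ℝ => (v : ℂ)) 1 ω := by
    simpa using (hasDerivAt_id ω).ofReal_comp
  have hsq : HasDerivAt (fun v : ℝ => (σ ^ 2 * v ^ 2 / (4 * κ) : ℝ))
      (σ ^ 2 * (2 * ω) / (4 * κ)) ω := by
    simpa using ((hasDerivAt_pow 2 ω).const_mul (σ ^ 2)).div_const (4 * κ)
  have h := ((hasDerivAt_const ω ((κ * (s - t) : ℝ) : ℂ)).sub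
    ((hω.const_mul ((θ : ℂ) * I)).mul_const (1 - ((Real.exp (κ * (s - t)) : ℝ) : ℂ)))).add
    (hsq.ofReal_comp.mul_const (1 - ((Real.exp (2 * κ * (s - t)) : ℝ) : ℂ)))
  exact h.congr_deriv (by ring)

theorem transportDeriv_fstExponent {κ : ℝ} (hκ : κ ≠ 0) (t ω : ℝ) :
    transportDeriv κ (fstExponent κ θ σ s) t ω
      = -((κ : ℂ) * θ * I * ω + κ - ((ω ^ 2 * σ ^ 2 / 2 : ℝ) : ℂ)) := by
  simp only [transportDeriv, (hasDerivAt_fstExponent_time κ θ σ s t ω).deriv,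
    (hasDerivAt_fstExponent_freq κ θ σ s t ω).deriv]
  have hκ' : (κ : ℂ) ≠ 0 := by exact_mod_cast hκ
  push_cast
  field_simp
  ring

end Exponent

open Complex in
/-- Method-of-characteristics solution of the frequency-space PDE arising in
the FST method: with
`F̂(t,ω) = exp(κ(s−t) − θiω(1−e^{κ(s−t)}) + (σ²ω²/(4κ))(1−e^{2κ(s−t)})) Ĝ(e^{κ(s−t)}ω)`,
one has `F̂(s,ω) = Ĝ(ω)` and
`∂_t F̂ + κω ∂_ω F̂ + (κθiω + κ − ω²σ²/2) F̂ = 0`. -/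
theorem stmt15 (κ : ℝ) (hκ : κ ≠ 0) (θ σ s : ℝ)
    (G : ℝ → ℂ) (hG : Differentiable ℝ G)
    (F : ℝ → ℝ → ℂ)
    (hF : ∀ t ω, F t ω = Complex.exp (
        (κ * (s - t) : ℝ)
        - (θ : ℂ) * Complex.I * (ω : ℂ) * (1 - (Real.exp (κ * (s - t)) : ℝ))
        + ((σ ^ 2 * ω ^ 2 / (4 * κ) : ℝ) : ℂ) * (1 - (Real.exp (2 * κ * (s - t)) : ℝ)))
      * G (Real.exp (κ * (s - t)) * ω)) :
    (∀ ω, F s ω = G ω) ∧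
    ∀ t ω : ℝ,
      deriv (fun u => F u ω) t
      + (κ * ω : ℝ) * deriv (fun v => F t v) ω
      + ((κ : ℂ) * (θ : ℂ) * Complex.I * (ω : ℂ) + (κ : ℂ) - (ω ^ 2 * σ ^ 2 / 2 : ℝ))
          * F t ω = 0 := by
  have hFeq : F = fun t ω => exp (fstExponent κ θ σ s t ω) * G (Real.exp (κ * (s - t)) * ω) :=
    funext₂ hF
  refine ⟨fun ω => by simp [hF], fun t ω => ?_⟩
  change transportDeriv κ F t ω + _ = 0
  rw [hFeq, transportDeriv_cexp_mul (hasDerivAt_fstExponent_time κ θ σ s t ω).differentiableAt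
    (hasDerivAt_fstExponent_freq κ θ σ s t ω).differentiableAt
    (hasDerivAt_comp_characteristic_time (hG _)).differentiableAt
    (hasDerivAt_comp_characteristic_freq (hG _)).differentiableAt,
    transportDeriv_fstExponent θ σ s hκ, transportDeriv_comp_characteristic (hG _)]
  ring
end
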